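/- In the MRSS (Multidimensional Relaxed Subset Sum) reduction instance for EF donation, deleting the resources {r*_{i} : i ∈ I} from the special agent's bundle (for I ⊆ [ν] with |I| ≤ k') yields an envy-free allocation if and only if Σ_{i∈I} s_i ≥ t coordinatewise; hence the constructed EF donation instance with deletion budget k' is a yes-instance iff the MRSS instance (k, S = {s₁,…,s_ν} ⊆ ℕᵏ, target t ∈ ℕᵏ, k') is a yes-instance. -/
import Mathlib


/-- Utilities of the MRSS reduction: agent `none` is the special agent a* valuing each
resource r*_i (= `Sum.inr i`) as 1 and each r_j (= `Sum.inl j`) as 0; agent `some j`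
values r*_i as s_i[j], its own resource r_j as Σᵢ s_i[j] − t[j], and other r_{j'} as 0. -/
def u18 {ν k : ℕ} (s : Fin ν → Fin k → ℕ) (t : Fin k → ℕ) :
    Option (Fin k) → (Fin k ⊕ Fin ν) → ℕ
  | none, Sum.inl _ => 0
  | none, Sum.inr _ => 1
  | some j, Sum.inl j' => if j' = j then (∑ i, s i j) - t j else 0
  | some j, Sum.inr i => s i j

/-- Initial allocation of the MRSS reduction: a* holds all r*_i, agent a_j holds r_j. -/
def π18 (ν k : ℕ) : Option (Fin k) → Finset (Fin k ⊕ Fin ν)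
  | none => Finset.univ.image Sum.inr
  | some j => {Sum.inl j}

lemma sum_inr_image18 {ν k : ℕ} (f : Fin k ⊕ Fin ν → ℕ) (J : Finset (Fin ν)) :
    (J.image Sum.inr).sum f = ∑ i ∈ J, f (Sum.inr i) :=
  Finset.sum_image (by simp)

/-- Deleting {r*_i : i ∈ I} (|I| ≤ k') from a*'s bundle yields an envy-free allocation iff
Σ_{i∈I} s_i ≥ t coordinatewise; hence the constructed EF donation instance with deletion
budget k' is a yes-instance iff the MRSS instance is a yes-instance. -/
theorem stmt18 (ν k k' : ℕ) (s : Fin ν → Fin k → ℕ) (t : Fin k → ℕ)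
    (ht : ∀ j, t j ≤ ∑ i, s i j) :
    (∀ I : Finset (Fin ν), I.card ≤ k' →
      ((∀ a b : Option (Fin k),
          ((Function.update (π18 ν k) none ((Finset.univ \ I).image Sum.inr)) b).sum
              (u18 s t a) ≤
            ((Function.update (π18 ν k) none ((Finset.univ \ I).image Sum.inr)) a).sum
              (u18 s t a)) ↔
        (∀ j : Fin k, t j ≤ ∑ i ∈ I, s i j))) ∧
    ((∃ π' : Option (Fin k) → Finset (Fin k ⊕ Fin ν),
        (∀ a, π' a ⊆ π18 ν k a) ∧
        (∑ a : Option (Fin k), ((π18 ν k a) \ (π' a)).card) ≤ k' ∧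
        (∀ a b : Option (Fin k),
          (π' b).sum (u18 s t a) ≤ (π' a).sum (u18 s t a))) ↔
      (∃ I : Finset (Fin ν), I.card ≤ k' ∧ ∀ j : Fin k, t j ≤ ∑ i ∈ I, s i j)) := by
  have hsubsum : ∀ (I : Finset (Fin ν)) j, ∑ i ∈ I, s i j ≤ ∑ i, s i j := fun I j =>
    Finset.sum_le_sum_of_subset (Finset.subset_univ I)
  have hsd : ∀ (I : Finset (Fin ν)) j,
      ∑ i ∈ Finset.univ \ I, s i j = ∑ i, s i j - ∑ i ∈ I, s i j := fun I j => by
    have := Finset.sum_sdiff (f := fun i => s i j) (Finset.subset_univ I)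
    beta_reduce at *
    omega
  have H1 : ∀ I : Finset (Fin ν),
      ((∀ a b : Option (Fin k),
          ((Function.update (π18 ν k) none ((Finset.univ \ I).image Sum.inr)) b).sum
              (u18 s t a) ≤
            ((Function.update (π18 ν k) none ((Finset.univ \ I).image Sum.inr)) a).sum
              (u18 s t a)) ↔
        (∀ j : Fin k, t j ≤ ∑ i ∈ I, s i j)) := by
    intro I
    constructor
    · intro hEF j
      have h := hEF (some j) none
      rw [Function.update_self, Function.update_of_ne (Option.some_ne_none j)] at h
      simp [π18, sum_inr_image18, u18] at h
      have := hsd I j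
      have := hsubsum I j
      have := ht j
      beta_reduce at *
      omega
    · intro hts a b
      match a, b with
      | none, none => exact le_refl _
      | none, some j' =>
        rw [Function.update_self, Function.update_of_ne (Option.some_ne_none j')]
        simp [π18, u18]
      | some j, none =>
        rw [Function.update_self, Function.update_of_ne (Option.some_ne_none j)]
        simp [π18, sum_inr_image18, u18]
        have := hsd I j
        have := hsubsum I j
        have := hts j
        beta_reduce at *
        omega
      | some j, some j' =>
        rw [Function.update_of_ne (Option.some_ne_none j),
          Function.update_of_ne (Option.some_ne_none j')]
        simp only [π18, Finset.sum_singleton, u18]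
        by_cases h : j' = j
        · simp [h]
        · simp [h]
    
  refine ⟨fun I _ => H1 I, ?_, ?_⟩
  · rintro ⟨π', hsub, hbud, hEF⟩
    set I : Finset (Fin ν) := Finset.univ.filter (fun i => Sum.inr i ∉ π' none) with hIdef
    have hnone : π' none = (Finset.univ \ I).image Sum.inr := by
      ext x
      constructor
      · intro hx
        have hx' := hsub none hx
        simp only [π18, Finset.mem_image, Finset.mem_univ, true_and] at hx'
        obtain ⟨i, rfl⟩ := hx'
        simp only [Finset.mem_image, Finset.mem_sdiff, Finset.mem_univ, true_and]
        exact ⟨i, by simp [hIdef, hx], rfl⟩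
      · intro hx
        simp only [Finset.mem_image, Finset.mem_sdiff, Finset.mem_univ, true_and,
          hIdef, Finset.mem_filter, not_not] at hx
        obtain ⟨i, hi, rfl⟩ := hx
        exact hi
    refine ⟨I, ?_, ?_⟩
    · have himg : I.image Sum.inr = π18 ν k none \ π' none := by
        rw [hnone, π18]
        rw [← Finset.image_sdiff _ _ (fun _ _ => Sum.inr.inj)]
        congr 1
        simp [Finset.sdiff_sdiff_self_left]
      have hcard : I.card = (π18 ν k none \ π' none).card := by
        rw [← himg, Finset.card_image_of_injective _ (fun _ _ => Sum.inr.inj)]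
      have hle : (π18 ν k none \ π' none).card ≤
          ∑ a : Option (Fin k), ((π18 ν k a) \ (π' a)).card :=
        Finset.single_le_sum (f := fun a => ((π18 ν k a) \ (π' a)).card)
          (fun _ _ => Nat.zero_le _) (Finset.mem_univ none)
      beta_reduce at *
      omega
    · intro j
      have h := hEF (some j) none
      rw [hnone] at h
      have h2 : (π' (some j)).sum (u18 s t (some j)) ≤
          ({Sum.inl j} : Finset (Fin k ⊕ Fin ν)).sum (u18 s t (some j)) :=
        Finset.sum_le_sum_of_subset (hsub (some j))
      simp [sum_inr_image18, u18] at h h2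
      have := hsd I j
      have := hsubsum I j
      have := ht j
      beta_reduce at *
      omega
  · rintro ⟨I, hI, hts⟩
    refine ⟨Function.update (π18 ν k) none ((Finset.univ \ I).image Sum.inr), ?_, ?_, ?_⟩
    · intro a
      match a with
      | none =>
        rw [Function.update_self]
        exact Finset.image_subset_image (Finset.sdiff_subset)
      | some j =>
        rw [Function.update_of_ne (Option.some_ne_none j)]
    · rw [Fintype.sum_option]
      have h1 : (π18 ν k none \
          Function.update (π18 ν k) none ((Finset.univ \ I).image Sum.inr) none).card
          = I.card := by
        rw [Function.update_self, π18,
          ← Finset.image_sdiff _ _ (fun _ _ => Sum.inr.inj),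
          Finset.card_image_of_injective _ (fun _ _ => Sum.inr.inj)]
        congr 1
        simp [Finset.sdiff_sdiff_self_left]
      have h2 : ∀ j : Fin k, (π18 ν k (some j) \
          Function.update (π18 ν k) none ((Finset.univ \ I).image Sum.inr) (some j)).card
          = 0 := by
        intro j
        rw [Function.update_of_ne (Option.some_ne_none j)]
        simp
      simp only [h1, h2, Finset.sum_const_zero]
      beta_reduce at *
      omega
    · exact (H1 I).mpr hts
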